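/- If T₁, …, T_n are metric trees, then the product T₁ × … × T_n equipped with the sum metric satisfies ℓ-asdim(T₁ × … × T_n) ≤ n, and consequently asdim(T₁ × … × T_n) ≤ n. -/

import Mathlib

/-- `X` admits a covering split into `m` families of subsets, each family
`R`-disjoint, with all members of diameter at most `D`. -/
def ColoredCover (X : Type*) [MetricSpace X] (m : ℕ) (R D : ℝ) : Prop :=
  ∃ B : Fin m → Set (Set X),
    (∀ x : X, ∃ i : Fin m, ∃ U ∈ B i, x ∈ U) ∧
    (∀ i : Fin m, ∀ U ∈ B i, ∀ x ∈ U, ∀ y ∈ U, dist x y ≤ D) ∧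
    (∀ i : Fin m, ∀ U ∈ B i, ∀ V ∈ B i, U ≠ V → ∀ x ∈ U, ∀ y ∈ V, R ≤ dist x y)

/-- `asdim X ≤ n`: for every sufficiently large `R > 0` there are `D > 0` and a
covering of `X` by `D`-bounded subsets split into `n+1` `R`-disjoint families. -/
def AsdimLE (X : Type*) [MetricSpace X] (n : ℕ) : Prop :=
  ∃ R₀ > (0 : ℝ), ∀ R ≥ R₀, ∃ D > (0 : ℝ), ColoredCover X (n + 1) R D

/-- `ℓ-asdim X ≤ n`: there is `C > 0` such that for every sufficiently large
`R > 0` there is a covering of `X` by `C·R`-bounded subsets split into `n+1`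
`R`-disjoint families. -/
def LAsdimLE (X : Type*) [MetricSpace X] (n : ℕ) : Prop :=
  ∃ C > (0 : ℝ), ∃ R₀ > (0 : ℝ), ∀ R ≥ R₀, ColoredCover X (n + 1) R (C * R)

/-- The asymptotic dimension of `X`, as an extended natural number. -/
noncomputable def asdim (X : Type*) [MetricSpace X] : ℕ∞ :=
  sInf {m : ℕ∞ | ∃ n : ℕ, m = (n : ℕ∞) ∧ AsdimLE X n}

/-- The linearly-controlled asymptotic dimension of `X`, as an extended
natural number. -/
noncomputable def lasdim (X : Type*) [MetricSpace X] : ℕ∞ :=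
  sInf {m : ℕ∞ | ∃ n : ℕ, m = (n : ℕ∞) ∧ LAsdimLE X n}

/-- `s` is (the image of) a geodesic segment from `x` to `y`. -/
def IsGeodesicSeg (X : Type*) [MetricSpace X] (s : Set X) (x y : X) : Prop :=
  ∃ γ : ℝ → X, γ 0 = x ∧ γ (dist x y) = y ∧
    (∀ a ∈ Set.Icc (0 : ℝ) (dist x y), ∀ b ∈ Set.Icc (0 : ℝ) (dist x y),
      dist (γ a) (γ b) = |a - b|) ∧
    s = γ '' Set.Icc (0 : ℝ) (dist x y)

/-- A geodesic metric space: any two points are joined by a geodesic segment. -/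
def GeodesicSpace (X : Type*) [MetricSpace X] : Prop :=
  ∀ x y : X, ∃ s : Set X, IsGeodesicSeg X s x y

/-- A tripod: a union of three geodesic segments `xt ∪ yt ∪ zt` having only
the point `t` in common (possibly degenerate). -/
def IsTripod (X : Type*) [MetricSpace X] (s : Set X) : Prop :=
  ∃ (x y z t : X) (sx sy sz : Set X),
    IsGeodesicSeg X sx x t ∧ IsGeodesicSeg X sy y t ∧ IsGeodesicSeg X sz z t ∧
    sx ∩ sy = {t} ∧ sy ∩ sz = {t} ∧ sx ∩ sz = {t} ∧
    s = sx ∪ sy ∪ sz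

/-- A metric tree: a geodesic metric space in which every geodesic triangle
is a tripod. -/
def IsMetricTree (X : Type*) [MetricSpace X] : Prop :=
  GeodesicSpace X ∧
  ∀ (x y z : X) (sxy syz szx : Set X),
    IsGeodesicSeg X sxy x y → IsGeodesicSeg X syz y z → IsGeodesicSeg X szx z x →
    IsTripod X (sxy ∪ syz ∪ szx)

/-!
In a metric tree the sides of a geodesic triangle `p x y` lie in its tripod, a star whose own
tree metric agrees with the distance along each side; since Gromov products at the centre of a
star are ultrametric, a point of a geodesic from `p` to `x` at distance at most `(x | y)_p` from
`p` also lies on every geodesic from `p` to `y`. So the point `π r v` at distance `r` from `p`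
towards `v` is the same for all `v` in a branch at radius `r`, and the annulus
`β + R ≤ dist p v ≤ β + L - R` splits along `π β` into `R`-separated pieces of diameter at most
`2 L`.

In the `L¹`-product of `n` trees use `n + 1` colours, colour `j` taking the annuli of width
`L = 2 (n + 1) R` with inner radii in `2 j R + L ℤ`. A radius misses the annuli of colour `j`
only within `R` of `2 j R + L ℤ`, which happens for at most one `j`; so every point has a colour
for which all of its coordinates lie in annuli, and products of pieces form a cover by sets of
diameter at most `2 n L ≤ 4 (n + 1) ^ 2 R`, `R`-disjoint within each colour.
-/

open Set

namespace IsGeodesicSeg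

variable {X : Type*} [MetricSpace X] {s : Set X} {u v w w' : X}

lemma left_mem (h : IsGeodesicSeg X s u v) : u ∈ s := by
  obtain ⟨γ, h0, -, -, rfl⟩ := h
  exact ⟨0, ⟨le_rfl, dist_nonneg⟩, h0⟩

lemma right_mem (h : IsGeodesicSeg X s u v) : v ∈ s := by
  obtain ⟨γ, -, hd, -, rfl⟩ := h
  exact ⟨dist u v, ⟨dist_nonneg, le_rfl⟩, hd⟩

lemma exists_param (h : IsGeodesicSeg X s u v) :
    ∃ γ : ℝ → X, ContinuousOn γ (Icc 0 (dist u v)) ∧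
      (∀ a ∈ Icc 0 (dist u v), ∀ b ∈ Icc 0 (dist u v), dist (γ a) (γ b) = |a - b|) ∧
      (∀ a ∈ Icc 0 (dist u v), dist u (γ a) = a) ∧ s = γ '' Icc 0 (dist u v) := by
  obtain ⟨γ, h0, -, hiso, rfl⟩ := h
  refine ⟨γ, ?_, hiso, fun a ha => ?_, rfl⟩
  · refine (LipschitzOnWith.of_dist_le_mul (K := 1) fun a ha b hb => ?_).continuousOn
    rw [hiso a ha b hb, NNReal.coe_one, one_mul, Real.dist_eq]
  · rw [← h0, hiso 0 ⟨le_rfl, dist_nonneg⟩ a ha, zero_sub, abs_neg, abs_of_nonneg ha.1]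

lemma dist_le_of_mem (h : IsGeodesicSeg X s u v) (hw : w ∈ s) : dist u w ≤ dist u v := by
  obtain ⟨γ, -, -, hu, rfl⟩ := h.exists_param
  obtain ⟨a, ha, rfl⟩ := hw
  exact (hu a ha).trans_le ha.2

lemma dist_eq_abs_of_mem (h : IsGeodesicSeg X s u v) (hw : w ∈ s) (hw' : w' ∈ s) :
    dist w w' = |dist u w - dist u w'| := by
  obtain ⟨γ, -, hiso, hu, rfl⟩ := h.exists_param
  obtain ⟨a, ha, rfl⟩ := hw
  obtain ⟨b, hb, rfl⟩ := hw'
  rw [hiso a ha b hb, hu a ha, hu b hb]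

lemma dist_add_dist_of_mem (h : IsGeodesicSeg X s u v) (hw : w ∈ s) :
    dist u w + dist w v = dist u v := by
  rw [h.dist_eq_abs_of_mem hw h.right_mem, abs_of_nonpos (sub_nonpos.2 (h.dist_le_of_mem hw))]
  ring

lemma exists_mem_dist_eq (h : IsGeodesicSeg X s u v) {r : ℝ} (hr : r ∈ Icc 0 (dist u v)) :
    ∃ w ∈ s, dist u w = r := by
  obtain ⟨γ, -, -, hu, rfl⟩ := h.exists_param
  exact ⟨γ r, mem_image_of_mem γ hr, hu r hr⟩

lemma isClosed (h : IsGeodesicSeg X s u v) : IsClosed s := by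
  obtain ⟨γ, hγ, -, -, rfl⟩ := h.exists_param
  exact (isCompact_Icc.image_of_continuousOn hγ).isClosed

lemma isPreconnected_setOf_dist_mem {I : Set ℝ} (h : IsGeodesicSeg X s u v)
    (hI : I.OrdConnected) :
    IsPreconnected {w ∈ s | dist u w ∈ I} := by
  obtain ⟨γ, hγ, -, hu, rfl⟩ := h.exists_param
  have : {w ∈ γ '' Icc 0 (dist u v) | dist u w ∈ I} = γ '' (Icc 0 (dist u v) ∩ I) := by
    ext w
    constructor
    · rintro ⟨⟨a, ha, rfl⟩, hI⟩
      exact ⟨a, ⟨ha, hu a ha ▸ hI⟩, rfl⟩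
    · rintro ⟨a, ⟨ha, haI⟩, rfl⟩
      exact ⟨⟨a, ha, rfl⟩, (hu a ha).symm ▸ haI⟩
  rw [this]
  exact (ordConnected_Icc.inter hI).isPreconnected.image γ (hγ.mono inter_subset_left)

end IsGeodesicSeg

structure IsStar {X : Type*} [MetricSpace X] {ι : Type*} (leg : ι → Set X) (t : X) : Prop where
  isGeodesicSeg : ∀ i, ∃ e, IsGeodesicSeg X (leg i) e t
  inter_eq : Pairwise fun i j => leg i ∩ leg j = {t}

lemma IsTripod.exists_isStar {X : Type*} [MetricSpace X] {s : Set X} (h : IsTripod X s) :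
    ∃ (leg : Fin 3 → Set X) (t : X), IsStar leg t ∧ s = ⋃ i, leg i := by
  obtain ⟨x, y, z, t, sx, sy, sz, hx, hy, hz, hxy, hyz, hxz, rfl⟩ := h
  refine ⟨![sx, sy, sz], t, ⟨fun i => ?_, fun i j hij => ?_⟩, ?_⟩
  · fin_cases i
    exacts [⟨x, hx⟩, ⟨y, hy⟩, ⟨z, hz⟩]
  · fin_cases i <;> fin_cases j <;> simp_all [inter_comm]
  · ext w
    simp [Fin.exists_fin_succ, or_assoc]

open Classical in
/-- The Gromov product at the centre `t` for the tree metric of the star, which is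
`|dist u t - dist v t|` on a common leg and `dist u t + dist v t` otherwise. -/
noncomputable def centerProd {X : Type*} [MetricSpace X] {ι : Type*} (leg : ι → Set X)
    (t u v : X) : ℝ :=
  if ∃ i, u ∈ leg i ∧ v ∈ leg i then min (dist u t) (dist v t) else 0

section CenterProd

variable {X : Type*} [MetricSpace X] {ι : Type*} {leg : ι → Set X} {t u v : X}

lemma centerProd_comm : centerProd leg t u v = centerProd leg t v u := by
  unfold centerProd
  rw [min_comm]
  classical
  exact if_congr ⟨fun ⟨i, hu, hv⟩ => ⟨i, hv, hu⟩, fun ⟨i, hv, hu⟩ => ⟨i, hu, hv⟩⟩ rfl rfl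

lemma centerProd_nonneg : 0 ≤ centerProd leg t u v := by
  unfold centerProd
  split_ifs
  exacts [le_min dist_nonneg dist_nonneg, le_rfl]

lemma centerProd_le_left : centerProd leg t u v ≤ dist u t := by
  unfold centerProd
  split_ifs
  exacts [min_le_left _ _, dist_nonneg]

end CenterProd

namespace IsStar

variable {X : Type*} [MetricSpace X] {ι : Type*} {leg : ι → Set X} {t u v w : X}

lemma eq_center_of_mem (hS : IsStar leg t) {i j : ι} (hij : i ≠ j) (hi : u ∈ leg i)
    (hj : u ∈ leg j) : u = t := by
  have hu : u ∈ leg i ∩ leg j := ⟨hi, hj⟩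
  rwa [hS.inter_eq hij] at hu

lemma dist_eq_of_mem (hS : IsStar leg t) {i : ι} (hu : u ∈ leg i) (hv : v ∈ leg i) :
    dist u v = dist u t + dist v t - 2 * min (dist u t) (dist v t) := by
  obtain ⟨e, he⟩ := hS.isGeodesicSeg i
  have hue := he.dist_add_dist_of_mem hu
  have hve := he.dist_add_dist_of_mem hv
  rw [he.dist_eq_abs_of_mem hu hv]
  rcases le_total (dist u t) (dist v t) with h | h
  · rw [min_eq_left h, abs_of_nonneg (by linarith)]
    linarith
  · rw [min_eq_right h, abs_of_nonpos (by linarith)]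
    linarith

lemma exists_mem_of_isPreconnected [Finite ι] (hS : IsStar leg t) {K : Set X}
    (hK : IsPreconnected K) (hKS : K ⊆ ⋃ i, leg i) (ht : t ∉ K) (hu : u ∈ K) (hv : v ∈ K) :
    ∃ i, u ∈ leg i ∧ v ∈ leg i := by
  have hclosed : ∀ i, IsClosed (leg i) := fun i => (hS.isGeodesicSeg i).choose_spec.isClosed
  obtain ⟨i, hui⟩ := mem_iUnion.1 (hKS hu)
  refine ⟨i, hui, by_contra fun hvi => ?_⟩
  have hcover : K ⊆ leg i ∪ ⋃ j ∈ ({i}ᶜ : Set ι), leg j := fun w hw => by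
    obtain ⟨j, hwj⟩ := mem_iUnion.1 (hKS hw)
    by_cases hji : j = i
    · exact Or.inl (hji ▸ hwj)
    · exact Or.inr (mem_biUnion hji hwj)
  obtain ⟨j, hvj⟩ := mem_iUnion.1 (hKS hv)
  have hji : j ≠ i := fun h => hvi (h ▸ hvj)
  obtain ⟨w, hwK, hwi, hw⟩ := isPreconnected_closed_iff.1 hK _ _ (hclosed i)
    ((toFinite _).isClosed_biUnion fun j _ => hclosed j) hcover ⟨u, hu, hui⟩
    ⟨v, hv, mem_biUnion hji hvj⟩
  obtain ⟨k, hki, hwk⟩ := mem_iUnion₂.1 hw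
  exact ht (hS.eq_center_of_mem (Ne.symm hki) hwi hwk ▸ hwK)

lemma min_centerProd_le (hS : IsStar leg t) :
    min (centerProd leg t u v) (centerProd leg t v w) ≤ centerProd leg t u w := by
  by_cases huv : ∃ i, u ∈ leg i ∧ v ∈ leg i
  · by_cases hvw : ∃ i, v ∈ leg i ∧ w ∈ leg i
    · obtain ⟨i, hui, hvi⟩ := huv
      obtain ⟨j, hvj, hwj⟩ := hvw
      simp only [centerProd]
      by_cases hvt : v = t
      · rw [if_pos ⟨i, hui, hvi⟩, hvt, dist_self]
        exact (min_le_left _ _).trans ((min_le_right _ _).trans centerProd_nonneg)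
      obtain rfl : i = j := by_contra fun hij => hvt (hS.eq_center_of_mem hij hvi hvj)
      rw [if_pos ⟨i, hui, hvi⟩, if_pos ⟨i, hvi, hwj⟩, if_pos ⟨i, hui, hwj⟩]
      exact le_min ((min_le_left _ _).trans (min_le_left _ _))
        ((min_le_right _ _).trans (min_le_right _ _))
    · simp only [centerProd, if_neg hvw]
      exact (min_le_right _ _).trans centerProd_nonneg
  · simp only [centerProd, if_neg huv]
    exact (min_le_left _ _).trans centerProd_nonneg

lemma dist_le_centerProd (hS : IsStar leg t) :
    dist u v ≤ dist u t + dist v t - 2 * centerProd leg t u v := by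
  unfold centerProd
  split_ifs with huv
  · obtain ⟨i, hu, hv⟩ := huv
    exact (hS.dist_eq_of_mem hu hv).le
  · linarith [dist_triangle_right u v t]

lemma dist_eq_centerProd [Finite ι] (hS : IsStar leg t) {s : Set X} {e f : X}
    (hs : IsGeodesicSeg X s e f) (hsS : s ⊆ ⋃ i, leg i) (hu : u ∈ s) (hv : v ∈ s) :
    dist u v = dist u t + dist v t - 2 * centerProd leg t u v := by
  unfold centerProd
  split_ifs with huv
  · obtain ⟨i, hu, hv⟩ := huv
    exact hS.dist_eq_of_mem hu hv
  -- the arc of `s` between `u` and `v` runs through two legs, hence through `t`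
  have ht : t ∈ {w ∈ s | dist e w ∈ uIcc (dist e u) (dist e v)} := by
    by_contra ht
    exact huv (hS.exists_mem_of_isPreconnected
      (hs.isPreconnected_setOf_dist_mem ordConnected_uIcc) ((sep_subset _ _).trans hsS) ht
      ⟨hu, left_mem_uIcc⟩ ⟨hv, right_mem_uIcc⟩)
  have hseg := dist_add_dist_of_mem_segment (segment_eq_uIcc (𝕜 := ℝ) _ _ ▸ ht.2)
  rw [Real.dist_eq, Real.dist_eq, Real.dist_eq, ← hs.dist_eq_abs_of_mem hu ht.1,
    ← hs.dist_eq_abs_of_mem ht.1 hv, ← hs.dist_eq_abs_of_mem hu hv, dist_comm t v] at hseg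
  linarith

end IsStar

lemma four_point_le_of_ultrametric {α : Type*} (g : α → α → ℝ) (hcomm : ∀ u v, g u v = g v u)
    (hult : ∀ u v w, min (g u v) (g v w) ≤ g u w) {p x y z : α} (h₁ : g p x ≤ g p z)
    (h₂ : g p x ≤ g z x) (h₃ : g z x + g p y ≤ g x y + g p z) :
    g z x - g p x + g p y ≤ g z y := by
  have u1 := hult p z x
  have u2 := hult p y x
  have u3 := hult p x y
  have u4 := hult z p y
  have u5 := hult p y z
  have u6 := hult z y x
  rw [hcomm y x] at u2 u6
  rw [hcomm z p] at u4
  rw [hcomm y z] at u5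
  rw [min_le_iff] at u1 u2 u3 u4 u5 u6
  rcases le_total (g p z) (g z x) with hle | hle
  · have u7 := hult z x y
    rw [min_le_iff] at u7
    have hc : g p x = g p z := by rcases u1 with h | h <;> linarith
    rcases u3 with h3 | h3
    · rcases u2 with h | h <;> rcases u7 with h' | h' <;> linarith
    · rcases u4 with h | h <;> rcases u2 with h' | h' <;> linarith
  · have hc : g p x = g z x := by rcases u1 with h | h <;> linarith
    rcases u4 with h4 | h4
    · rcases u5 with h | h <;> rcases u6 with h' | h' <;> rcases u2 with h'' | h'' <;> linarith
    · linarith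

namespace IsMetricTree

variable {X : Type*} [MetricSpace X]

lemma dist_le_of_mem_geodesicSeg (hX : IsMetricTree X) {s : Set X} {p x y z : X}
    (hs : IsGeodesicSeg X s p x) (hz : z ∈ s)
    (h : dist x y + 2 * dist p z ≤ dist p x + dist p y) :
    dist z y ≤ dist p y - dist p z := by
  obtain ⟨sxy, hxy⟩ := hX.1 x y
  obtain ⟨syp, hyp⟩ := hX.1 y p
  obtain ⟨leg, t, hS, hU⟩ := (hX.2 p x y s sxy syp hs hxy hyp).exists_isStar
  have hsS : s ⊆ ⋃ i, leg i := hU ▸ subset_union_left.trans subset_union_left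
  have hxyS : sxy ⊆ ⋃ i, leg i := hU ▸ subset_union_right.trans subset_union_left
  have hypS : syp ⊆ ⋃ i, leg i := hU ▸ subset_union_right
  -- distances along the sides of the triangle are those of the tree metric of its tripod
  have hpz := hS.dist_eq_centerProd hs hsS hs.left_mem hz
  have hzx := hS.dist_eq_centerProd hs hsS hz hs.right_mem
  have hpx := hS.dist_eq_centerProd hs hsS hs.left_mem hs.right_mem
  have hxy' := hS.dist_eq_centerProd hxy hxyS hxy.left_mem hxy.right_mem
  have hyp' := hS.dist_eq_centerProd hyp hypS hyp.left_mem hyp.right_mem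
  have hzy := hS.dist_le_centerProd (u := z) (v := y)
  have hgeo := hs.dist_add_dist_of_mem hz
  have hpzt : centerProd leg t p z ≤ dist z t := centerProd_comm (u := z) ▸ centerProd_le_left
  have hzxt : centerProd leg t z x ≤ dist z t := centerProd_le_left
  rw [centerProd_comm, dist_comm y p] at hyp'
  have := four_point_le_of_ultrametric (centerProd leg t) (fun _ _ => centerProd_comm)
    (fun _ _ _ => hS.min_centerProd_le) (p := p) (x := x) (y := y) (z := z)
    (by linarith) (by linarith) (by linarith)
  linarith

lemma eq_of_mem_geodesicSeg (hX : IsMetricTree X) {s s' : Set X} {p v w m m' : X}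
    (hs : IsGeodesicSeg X s p v) (hs' : IsGeodesicSeg X s' p w) (hm : m ∈ s) (hm' : m' ∈ s')
    (hdist : dist p m' = dist p m) (h : 2 * dist p m ≤ dist p v + dist p w - dist v w) :
    m = m' := by
  have hmw := hX.dist_le_of_mem_geodesicSeg hs hm (by linarith)
  have hm'm := hX.dist_le_of_mem_geodesicSeg hs' hm' (y := m) (by rw [dist_comm]; linarith)
  exact (dist_le_zero.1 (by linarith)).symm

end IsMetricTree

/-- What the covering argument uses of the point `π r v` at distance `r` from `p` on a geodesic
from `p` to `v`. -/
structure IsRadialProjection {X : Type*} [MetricSpace X] (p : X) (π : ℝ → X → X) : Prop where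
  dist_le : ∀ r v, r ≤ dist p v → dist (π r v) v ≤ dist p v - r
  eq_of_le : ∀ r v w, 2 * r ≤ dist p v + dist p w - dist v w → π r v = π r w

lemma IsMetricTree.exists_isRadialProjection {X : Type*} [MetricSpace X] (hX : IsMetricTree X)
    (p : X) : ∃ π, IsRadialProjection p π := by
  choose s hs using hX.1 p
  have hmem : ∀ r v, ∃ m ∈ s v, dist p m = max 0 (min r (dist p v)) := fun r v =>
    (hs v).exists_mem_dist_eq ⟨le_max_left _ _, max_le dist_nonneg (min_le_right _ _)⟩
  choose π hπs hπ using hmem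
  refine ⟨π, fun r v hr => ?_, fun r v w h => ?_⟩
  · have hv := (hs v).dist_add_dist_of_mem (hπs r v)
    rw [hπ, min_eq_left hr] at hv
    linarith [le_max_right 0 r]
  · have hv : r ≤ dist p v := by linarith [dist_triangle p v w]
    have hw : r ≤ dist p w := by linarith [dist_triangle_right p v w]
    refine hX.eq_of_mem_geodesicSeg (hs v) (hs w) (hπs r v) (hπs r w) ?_ ?_
    · rw [hπ, hπ, min_eq_left hv, min_eq_left hw]
    · rw [hπ, min_eq_left hv]
      rcases le_total r 0 with hr | hr
      · rw [max_eq_left hr]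
        linarith [dist_triangle_left v w p]
      · rwa [max_eq_right hr]

section Annuli

variable {X : Type*} [MetricSpace X] {p : X} {π : ℝ → X → X} {R L β₀ : ℝ}

def annulusPiece (p : X) (π : ℝ → X → X) (R L β : ℝ) (c : X) : Set X :=
  {v | β + R ≤ dist p v ∧ dist p v ≤ β + L - R ∧ π β v = c}

def annulusPieces (p : X) (π : ℝ → X → X) (R L β₀ : ℝ) : Set (Set X) :=
  {U | ∃ (k : ℤ) (c : X), U = annulusPiece p π R L (L * k + β₀) c}

lemma IsRadialProjection.dist_le_of_mem_annulusPieces (hπ : IsRadialProjection p π)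
    (hR : 0 ≤ R) {U : Set X} (hU : U ∈ annulusPieces p π R L β₀) {v w : X} (hv : v ∈ U)
    (hw : w ∈ U) : dist v w ≤ 2 * (L - R) := by
  obtain ⟨k, c, rfl⟩ := hU
  obtain ⟨hv₁, hv₂, rfl⟩ := hv
  obtain ⟨hw₁, hw₂, hw₃⟩ := hw
  have hvc := hπ.dist_le (L * k + β₀) v (by linarith)
  have hwc := hπ.dist_le (L * k + β₀) w (by linarith)
  rw [hw₃] at hwc
  linarith [dist_triangle_left v w (π (L * k + β₀) v)]

lemma IsRadialProjection.le_dist_of_mem_annulusPieces (hπ : IsRadialProjection p π)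
    (hR : 0 ≤ R) (hL : 0 ≤ L) {U V : Set X} (hU : U ∈ annulusPieces p π R L β₀)
    (hV : V ∈ annulusPieces p π R L β₀) (hUV : U ≠ V) {v w : X} (hv : v ∈ U) (hw : w ∈ V) :
    R ≤ dist v w := by
  have hgap : ∀ {k k' : ℤ} {v w : X}, k < k' → dist p v ≤ L * k + β₀ + L - R →
      L * k' + β₀ + R ≤ dist p w → R ≤ dist v w := fun {k k' v w} hk hv hw => by
    have hkk : L * (k + 1 : ℤ) ≤ L * k' := mul_le_mul_of_nonneg_left (by exact_mod_cast hk) hL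
    push_cast at hkk
    linarith [dist_triangle p v w]
  obtain ⟨k, c, rfl⟩ := hU
  obtain ⟨k', c', rfl⟩ := hV
  obtain ⟨hv₁, hv₂, hv₃⟩ := hv
  obtain ⟨hw₁, hw₂, hw₃⟩ := hw
  rcases lt_trichotomy k k' with hk | rfl | hk
  · exact hgap hk hv₂ hw₁
  · refine le_of_not_gt fun hvw => hUV ?_
    rw [← hv₃, ← hw₃, hπ.eq_of_le _ v w (by linarith)]
  · exact dist_comm v w ▸ hgap hk hw₂ hv₁

lemma mem_annulusPieces {v : X} {k : ℤ} (h₁ : L * k + β₀ + R ≤ dist p v)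
    (h₂ : dist p v ≤ L * k + β₀ + L - R) : ∃ U ∈ annulusPieces p π R L β₀, v ∈ U :=
  ⟨_, ⟨k, π (L * k + β₀) v, rfl⟩, h₁, h₂, rfl⟩

end Annuli

lemma ColoredCover.mono {X : Type*} [MetricSpace X] {m : ℕ} {R D D' : ℝ}
    (h : ColoredCover X m R D) (hD : D ≤ D') : ColoredCover X m R D' := by
  obtain ⟨B, hcover, hdiam, hsep⟩ := h
  exact ⟨B, hcover, fun i U hU x hx y hy => (hdiam i U hU x hx y hy).trans hD, hsep⟩

lemma LAsdimLE.of_isEmpty {X : Type*} [MetricSpace X] [IsEmpty X] (n : ℕ) : LAsdimLE X n :=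
  ⟨1, one_pos, 1, one_pos, fun _ _ =>
    ⟨fun _ => ∅, isEmptyElim, fun _ _ h => h.elim, fun _ _ h => h.elim⟩⟩

lemma LAsdimLE.asdimLE {X : Type*} [MetricSpace X] {n : ℕ} (h : LAsdimLE X n) : AsdimLE X n := by
  obtain ⟨C, hC, R₀, hR₀, hcov⟩ := h
  exact ⟨R₀, hR₀, fun R hR => ⟨C * R, mul_pos hC (hR₀.trans_le hR), hcov R hR⟩⟩

lemma LAsdimLE.lasdim_le {X : Type*} [MetricSpace X] {n : ℕ} (h : LAsdimLE X n) : lasdim X ≤ n :=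
  sInf_le ⟨n, rfl, h⟩

lemma AsdimLE.asdim_le {X : Type*} [MetricSpace X] {n : ℕ} (h : AsdimLE X n) : asdim X ≤ n :=
  sInf_le ⟨n, rfl, h⟩

section Product

variable {ι : Type*} [Fintype ι] {T : ι → Type*} [∀ i, MetricSpace (T i)]

lemma PiLp.dist_eq_sum_of_one (x y : PiLp 1 T) : dist x y = ∑ i, dist (x i) (y i) := by
  simp [PiLp.dist_eq_sum (by norm_num : 0 < (1 : ENNReal).toReal)]

lemma coloredCover_piLp {m : ℕ} {R D : ℝ} (𝒰 : Fin m → ∀ i, Set (Set (T i)))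
    (hdiam : ∀ j i, ∀ U ∈ 𝒰 j i, ∀ x ∈ U, ∀ y ∈ U, dist x y ≤ D)
    (hsep : ∀ j i, ∀ U ∈ 𝒰 j i, ∀ V ∈ 𝒰 j i, U ≠ V → ∀ x ∈ U, ∀ y ∈ V, R ≤ dist x y)
    (hcover : ∀ x : PiLp 1 T, ∃ j, ∀ i, ∃ U ∈ 𝒰 j i, x i ∈ U) :
    ColoredCover (PiLp 1 T) m R (Fintype.card ι * D) := by
  refine ⟨fun j => {W | ∃ U : ∀ i, Set (T i), (∀ i, U i ∈ 𝒰 j i) ∧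
    W = {x : PiLp 1 T | ∀ i, x i ∈ U i}}, fun x => ?_, ?_, ?_⟩
  · obtain ⟨j, hj⟩ := hcover x
    choose U hU hxU using hj
    exact ⟨j, _, ⟨U, hU, rfl⟩, hxU⟩
  · rintro j _ ⟨U, hU, rfl⟩ x hx y hy
    rw [PiLp.dist_eq_sum_of_one]
    refine (Finset.sum_le_sum fun i _ => hdiam j i (U i) (hU i) _ (hx i) _ (hy i)).trans_eq ?_
    simp
  · rintro j _ ⟨U, hU, rfl⟩ _ ⟨V, hV, rfl⟩ hUV x hx y hy
    obtain ⟨i, hi⟩ : ∃ i, U i ≠ V i := by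
      by_contra! h
      exact hUV (by rw [funext h])
    rw [PiLp.dist_eq_sum_of_one]
    exact (hsep j i _ (hU i) _ (hV i) hi _ (hx i) _ (hy i)).trans
      (Finset.single_le_sum (fun i _ => dist_nonneg) (Finset.mem_univ i))

end Product

lemma exists_forall_not_of_card_lt {ι : Type*} [Fintype ι] {m : ℕ} (bad : ι → Fin m → Prop)
    (hbad : ∀ i j j', bad i j → bad i j' → j = j') (hm : Fintype.card ι < m) :
    ∃ j, ∀ i, ¬bad i j := by
  by_contra! h
  choose f hf using h
  obtain ⟨j, j', hne, heq⟩ := Fintype.exists_ne_map_eq_of_card_lt f (by simpa using hm)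
  exact hne (hbad _ _ _ (hf j) (heq ▸ hf j'))

lemma exists_int_sub_mem_Icc {L R a : ℝ} (hL : 0 < L) (h : ∀ k : ℤ, R ≤ |a - L * k|) :
    ∃ k : ℤ, a - L * k ∈ Icc R (L - R) := by
  have hk := (le_div_iff₀ hL).1 (Int.floor_le (a / L))
  have hk' := (div_lt_iff₀ hL).1 (Int.lt_floor_add_one (a / L))
  have h₀ := h ⌊a / L⌋
  have h₁ := h (⌊a / L⌋ + 1)
  push_cast at h₁
  rw [abs_of_nonneg (by linarith)] at h₀
  rw [abs_of_neg (by linarith)] at h₁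
  exact ⟨⌊a / L⌋, by linarith, by linarith⟩

lemma eq_of_abs_sub_lt {n : ℕ} {R a : ℝ} (hR : 0 < R) {j j' : Fin (n + 1)} {k k' : ℤ}
    (h : |a - 2 * j * R - 2 * (n + 1) * R * k| < R)
    (h' : |a - 2 * j' * R - 2 * (n + 1) * R * k'| < R) : j = j' := by
  set m : ℤ := (j' : ℤ) - j + (n + 1) * (k' - k)
  have hsub : (m : ℝ) * (2 * R) =
      (a - 2 * j * R - 2 * (n + 1) * R * k) - (a - 2 * j' * R - 2 * (n + 1) * R * k') := by
    push_cast [m]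
    ring
  have hm : |(m : ℝ)| * (2 * R) < 1 * (2 * R) := by
    have := (abs_sub _ _).trans_lt (add_lt_add h h')
    rw [← hsub, abs_mul, abs_of_pos (by positivity : (0 : ℝ) < 2 * R)] at this
    linarith
  have hm0 : m = 0 := Int.abs_lt_one_iff.1 <| by
    exact_mod_cast lt_of_mul_lt_mul_right hm (by positivity)
  have hj := j.isLt
  have hj' := j'.isLt
  have hjj : (j' : ℤ) - j = 0 := Int.eq_zero_of_abs_lt_dvd (m := n + 1)
    ⟨k - k', by linear_combination hm0⟩ (abs_sub_lt_iff.2 ⟨by omega, by omega⟩)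
  exact Fin.ext (by omega)

lemma lAsdimLE_piLp_of_isRadialProjection {ι : Type*} [Fintype ι] {T : ι → Type*}
    [∀ i, MetricSpace (T i)] (p : ∀ i, T i) (π : ∀ i, ℝ → T i → T i)
    (hπ : ∀ i, IsRadialProjection (p i) (π i)) : LAsdimLE (PiLp 1 T) (Fintype.card ι) := by
  set n := Fintype.card ι
  refine ⟨4 * (n + 1) ^ 2, by positivity, 1, one_pos, fun R hR₁ => ?_⟩
  have hR : 0 < R := one_pos.trans_le hR₁
  set L : ℝ := 2 * (n + 1) * R
  refine (coloredCover_piLp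
    (fun (j : Fin (n + 1)) i => annulusPieces (p i) (π i) R L (2 * j * R)) (D := 2 * (L - R))
    (fun j i U hU x hx y hy => (hπ i).dist_le_of_mem_annulusPieces hR.le hU hx hy)
    (fun j i U hU V hV hUV x hx y hy =>
      (hπ i).le_dist_of_mem_annulusPieces hR.le (by positivity) hU hV hUV hx hy)
    (fun x => ?_)).mono (by nlinarith)
  obtain ⟨j, hj⟩ := exists_forall_not_of_card_lt
    (fun i (j : Fin (n + 1)) => ∃ k : ℤ, |dist (p i) (x i) - 2 * j * R - L * k| < R)
    (fun i j j' ⟨k, hk⟩ ⟨k', hk'⟩ => eq_of_abs_sub_lt hR hk hk') (Nat.lt_succ_self n)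
  refine ⟨j, fun i => ?_⟩
  simp only [not_exists, not_lt] at hj
  obtain ⟨k, hk₁, hk₂⟩ := exists_int_sub_mem_Icc (R := R) (by positivity) (hj i)
  exact mem_annulusPieces (k := k) (by linarith) (by linarith)

/-- If `T₁, …, T_n` are metric trees, then their product with the sum metric
(realized as the `L¹`-product `PiLp 1 T`, whose distance is the sum of the
coordinate distances) satisfies `ℓ-asdim (T₁ × … × T_n) ≤ n`, and consequently
`asdim (T₁ × … × T_n) ≤ n`. -/
theorem lasdim_asdim_prod_trees_le {n : ℕ} (T : Fin n → Type*)
    [∀ i, MetricSpace (T i)] (hT : ∀ i, IsMetricTree (T i)) :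
    lasdim (PiLp 1 T) ≤ (n : ℕ∞) ∧ asdim (PiLp 1 T) ≤ (n : ℕ∞) := by
  have hmain : LAsdimLE (PiLp 1 T) n := by
    rcases isEmpty_or_nonempty (PiLp 1 T) with hE | ⟨⟨x₀⟩⟩
    · exact LAsdimLE.of_isEmpty n
    choose π hπ using fun i => (hT i).exists_isRadialProjection (x₀ i)
    simpa using lAsdimLE_piLp_of_isRadialProjection (fun i => x₀ i) π hπ
  exact ⟨hmain.lasdim_le, hmain.asdimLE.asdim_le⟩
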